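/- arXiv:1605.05112 — 4 statements merged into one kernel-verified Lean document; each statement's English description precedes it below -/
import Mathlib

section
/- Let C, D be small categories, E a type, and F : C ⥤ Discrete E, G : D ⥤ Discrete E functors, and let C ×_E D be the full subcategory of C × D on the objects (c,d) with F(c) = G(d). Then the set of connected components of C ×_E D is in bijection with the fiber product of sets (q C) ×_E (q D), i.e. with the set of pairs (u,v) with u a connected component of C and v a connected component of D such that the maps q C → E and q D → E induced by F and G send u and v to the same element of E. -/
/-!
A morphism of `C × D` does not change `F` on the first coordinate nor `G` on the second, so the
condition `F c = G d` is invariant under zigzags in `C × D`. Hence two objects of `C ×_E D` are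
connected there as soon as they are connected in `C × D`, i.e. as soon as their coordinates are
connected in `C` and in `D`. This makes the evident map `q (C ×_E D) → q C ×_E q D` injective;
it is surjective because any representatives `c`, `d` of a compatible pair satisfy `F c = G d`.
-/

open CategoryTheory

namespace CategoryTheory

theorem Zigzag.prod {J K : Type*} [Category J] [Category K] {j j' : J} {k k' : K}
    (hj : Zigzag j j') (hk : Zigzag k k') : Zigzag (j, k) (j', k') :=
  (zigzag_obj_of_zigzag (Prod.sectL J k) hj).trans (zigzag_obj_of_zigzag (Prod.sectR j' K) hk)

theorem ObjectProperty.zigzag_of_zigzag_obj {J : Type*} [Category J] (P : ObjectProperty J)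
    (hP : ∀ ⦃x y : J⦄, (x ⟶ y) → (P x ↔ P y)) {x y : P.FullSubcategory}
    (h : Zigzag x.obj y.obj) : Zigzag x y := by
  obtain ⟨y, hy⟩ := y
  change Zigzag x.obj y at h
  induction h with
  | refl => rfl
  | @tail b c _ hbc ih =>
    have hb : P b := by
      rcases hbc with ⟨⟨f⟩⟩ | ⟨⟨f⟩⟩
      exacts [(hP f).mpr hy, (hP f).mp hy]
    exact (ih hb).trans (.of_zag (zag_of_zag_obj P.ι hbc))

end CategoryTheory

section FiberProduct

variable {C D E : Type*} [Category C] [Category D] (F : C ⥤ Discrete E) (G : D ⥤ Discrete E)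

abbrev fiberProductProperty : ObjectProperty (C × D) := fun p => F.obj p.1 = G.obj p.2

theorem fiberProductProperty_iff_of_hom {p q : C × D} (f : p ⟶ q) :
    fiberProductProperty F G p ↔ fiberProductProperty F G q := by
  have hF : F.obj p.1 = F.obj q.1 := Discrete.ext (Discrete.eq_of_hom (F.map f.1))
  have hG : G.obj p.2 = G.obj q.2 := Discrete.ext (Discrete.eq_of_hom (G.map f.2))
  simp only [fiberProductProperty, hF, hG]

abbrev ConnectedComponents.fiberProduct : Type _ :=
  {p : ConnectedComponents C × ConnectedComponents D //
    ConnectedComponents.liftFunctor C F p.1 = ConnectedComponents.liftFunctor D G p.2}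

def connectedComponentsFiberProductMap :
    ConnectedComponents (fiberProductProperty F G).FullSubcategory →
      ConnectedComponents.fiberProduct F G :=
  fun x =>
    ⟨((ObjectProperty.ι _ ⋙ CategoryTheory.Prod.fst C D).mapConnectedComponents x,
        (ObjectProperty.ι _ ⋙ CategoryTheory.Prod.snd C D).mapConnectedComponents x),
      Quotient.inductionOn x fun p => congrArg Discrete.as p.property⟩

theorem connectedComponentsFiberProductMap_injective :
    Function.Injective (connectedComponentsFiberProductMap F G) := by
  rintro ⟨p⟩ ⟨q⟩ h
  have hC : Zigzag p.obj.1 q.obj.1 := Quotient.exact (congrArg (·.1.1) h)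
  have hD : Zigzag p.obj.2 q.obj.2 := Quotient.exact (congrArg (·.1.2) h)
  exact Quotient.sound <| (fiberProductProperty F G).zigzag_of_zigzag_obj
    (fun _ _ => fiberProductProperty_iff_of_hom F G) (hC.prod hD)

theorem connectedComponentsFiberProductMap_surjective :
    Function.Surjective (connectedComponentsFiberProductMap F G) := by
  rintro ⟨⟨⟨c⟩, ⟨d⟩⟩, h⟩
  exact ⟨Quotient.mk _ ⟨(c, d), Discrete.ext h⟩, rfl⟩

noncomputable def connectedComponentsFiberProductEquiv :
    ConnectedComponents (fiberProductProperty F G).FullSubcategory ≃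
      ConnectedComponents.fiberProduct F G :=
  .ofBijective (connectedComponentsFiberProductMap F G)
    ⟨connectedComponentsFiberProductMap_injective F G,
      connectedComponentsFiberProductMap_surjective F G⟩

end FiberProduct

/-- Let `C`, `D` be small categories, `E` a type, and
`F : C ⥤ Discrete E`, `G : D ⥤ Discrete E` functors, and let `C ×_E D` be the full
subcategory of `C × D` on the objects `(c,d)` with `F(c) = G(d)`.  Then the set of
connected components of `C ×_E D` is in bijection with the fiber product of sets
`(q C) ×_E (q D)`: the set of pairs `(u,v)` of connected components of `C` and `D` which
are sent to the same element of `E` by the maps induced by `F` and `G` (given by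
`ConnectedComponents.liftFunctor`). -/
theorem stmt4 (C D E : Type) [SmallCategory C] [SmallCategory D]
    (F : C ⥤ Discrete E) (G : D ⥤ Discrete E) :
    Nonempty (ConnectedComponents (ObjectProperty.FullSubcategory fun p : C × D => F.obj p.1 = G.obj p.2) ≃
      {p : ConnectedComponents C × ConnectedComponents D //
        ConnectedComponents.liftFunctor C F p.1 = ConnectedComponents.liftFunctor D G p.2}) :=
  ⟨connectedComponentsFiberProductEquiv F G⟩
end

section
/- Let C, D be small categories, E a type, and F : C ⥤ Discrete E, G : D ⥤ Discrete E functors, and let C ×_E D be the full subcategory of C × D on the objects (c,d) with F(c) = G(d). Then the set of isomorphism classes of objects of C ×_E D is in bijection with the fiber product of sets (p C) ×_E (p D), i.e. with the set of pairs (u,v) with u an isomorphism class of objects of C and v an isomorphism class of objects of D such that the maps p C → E and p D → E induced by F and G send u and v to the same element of E. -/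
open CategoryTheory

/-- The map `p C → E` on isomorphism classes of objects induced by a functor
`F : C ⥤ Discrete E` into a discrete category (isomorphic objects are sent to equal
elements of `E`). -/
def isoClassesLift {C : Type} [SmallCategory C] {E : Type} (F : C ⥤ Discrete E) :
    Quotient (isIsomorphicSetoid C) → E :=
  Quotient.lift (fun c => (F.obj c).as)
    (fun _ _ h => Discrete.eq_of_hom (F.map h.some.hom))

namespace CategoryTheory

theorem isIsomorphic_prod_iff {C D : Type*} [Category C] [Category D] {X Y : C × D} :
    IsIsomorphic X Y ↔ IsIsomorphic X.1 Y.1 ∧ IsIsomorphic X.2 Y.2 :=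
  ⟨fun ⟨e⟩ => ⟨⟨(Prod.fst C D).mapIso e⟩, ⟨(Prod.snd C D).mapIso e⟩⟩,
    fun ⟨⟨e₁⟩, ⟨e₂⟩⟩ => ⟨e₁.prod e₂⟩⟩

theorem ObjectProperty.isIsomorphic_iff {C : Type*} [Category C] {P : ObjectProperty C}
    {X Y : P.FullSubcategory} : IsIsomorphic X Y ↔ IsIsomorphic X.obj Y.obj :=
  ⟨fun ⟨e⟩ => ⟨P.ι.mapIso e⟩, fun ⟨e⟩ => ⟨P.isoMk e⟩⟩

end CategoryTheory

section FiberProduct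

variable {C D E : Type} [SmallCategory C] [SmallCategory D]

abbrev FiberProduct (F : C ⥤ Discrete E) (G : D ⥤ Discrete E) : Type :=
  ObjectProperty.FullSubcategory fun p : C × D => F.obj p.1 = G.obj p.2

abbrev IsoClassesFiberProduct (F : C ⥤ Discrete E) (G : D ⥤ Discrete E) : Type :=
  {p : Quotient (isIsomorphicSetoid C) × Quotient (isIsomorphicSetoid D) //
    isoClassesLift F p.1 = isoClassesLift G p.2}

variable (F : C ⥤ Discrete E) (G : D ⥤ Discrete E)

theorem isIsomorphic_fiberProduct_iff {X Y : FiberProduct F G} :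
    IsIsomorphic X Y ↔ IsIsomorphic X.obj.1 Y.obj.1 ∧ IsIsomorphic X.obj.2 Y.obj.2 :=
  ObjectProperty.isIsomorphic_iff.trans isIsomorphic_prod_iff

def isoClassesFiberProductMap :
    Quotient (isIsomorphicSetoid (FiberProduct F G)) → IsoClassesFiberProduct F G :=
  Quotient.lift (fun X => ⟨(⟦X.obj.1⟧, ⟦X.obj.2⟧), congrArg Discrete.as X.property⟩)
    fun _ _ h =>
      have ⟨h₁, h₂⟩ := (isIsomorphic_fiberProduct_iff F G).1 h
      Subtype.ext (Prod.ext (Quotient.sound h₁) (Quotient.sound h₂))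

theorem isoClassesFiberProductMap_injective :
    Function.Injective (isoClassesFiberProductMap F G) := by
  rintro ⟨X⟩ ⟨Y⟩ h
  obtain ⟨h₁, h₂⟩ := Prod.ext_iff.1 (Subtype.ext_iff.1 h)
  exact Quotient.sound
    ((isIsomorphic_fiberProduct_iff F G).2 ⟨Quotient.exact h₁, Quotient.exact h₂⟩)

theorem isoClassesFiberProductMap_surjective :
    Function.Surjective (isoClassesFiberProductMap F G) := by
  rintro ⟨⟨⟨c⟩, ⟨d⟩⟩, h⟩
  exact ⟨⟦⟨(c, d), Discrete.ext h⟩⟧, rfl⟩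

end FiberProduct

/-- Let `C`, `D` be small categories, `E` a type, and
`F : C ⥤ Discrete E`, `G : D ⥤ Discrete E` functors, and let `C ×_E D` be the full
subcategory of `C × D` on the objects `(c,d)` with `F(c) = G(d)`.  Then the set of
isomorphism classes of objects of `C ×_E D` is in bijection with the fiber product of
sets `(p C) ×_E (p D)`: pairs `(u,v)` of an isomorphism class of `C` and one of `D`
which are sent to the same element of `E` by the maps induced by `F` and `G`. -/
theorem stmt8 (C D E : Type) [SmallCategory C] [SmallCategory D]
    (F : C ⥤ Discrete E) (G : D ⥤ Discrete E) :
    Nonempty (Quotient (isIsomorphicSetoid (ObjectProperty.FullSubcategory fun p : C × D => F.obj p.1 = G.obj p.2)) ≃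
      {p : Quotient (isIsomorphicSetoid C) × Quotient (isIsomorphicSetoid D) //
        isoClassesLift F p.1 = isoClassesLift G p.2}) :=
  ⟨Equiv.ofBijective (isoClassesFiberProductMap F G)
    ⟨isoClassesFiberProductMap_injective F G, isoClassesFiberProductMap_surjective F G⟩⟩
end

section
/- Let C be a small category admitting an equivalence of categories to a discrete category, and let γ : Obj(C) → q C be the map sending each object to its connected component. Then for all objects a, b of C, the hom-set Hom_C(a,b) has at most one element, and it is nonempty if and only if γ(a) = γ(b); consequently C is isomorphic, as a category, to the equivalence-relation category (Obj C)[γ]. -/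
/-!
An equivalence `C ≌ Discrete A` is faithful, so `C` is thin, and full, so a zigzag `a ~ b`, which
becomes an equality in `Discrete A`, lifts to a morphism `a ⟶ b`. Hence `Hom(a, b)` is a
singleton exactly when `a` and `b` lie in the same connected component and empty otherwise,
which is precisely the hom-structure of `(Obj C)[γ]`.
-/

open CategoryTheory

/-- The equivalence-relation category `A[f]` associated to a function `f : A → B`:
objects are the elements of `A`, and there is exactly one morphism `a ⟶ a'` when
`f a = f a'` and no morphisms otherwise. -/
def EqRelCat {A B : Type} (_f : A → B) : Type := A

instance EqRelCat.category {A B : Type} (f : A → B) : Category (EqRelCat f) where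
  Hom a b := PLift (f a = f b)
  id _ := ⟨rfl⟩
  comp g h := ⟨g.down.trans h.down⟩

instance EqRelCat.isThin {A B : Type} (f : A → B) : Quiver.IsThin (EqRelCat f) :=
  fun _ _ => inferInstanceAs (Subsingleton (PLift _))

namespace CategoryTheory

variable {C D : Type*} [Category C] [Category D]

lemma Functor.isThin_of_faithful (F : C ⥤ D) [F.Faithful] [Quiver.IsThin D] :
    Quiver.IsThin C :=
  fun _ _ => ⟨fun _ _ => F.map_injective (Subsingleton.elim _ _)⟩

lemma Functor.nonempty_hom_of_zigzag {A : Type*} (F : C ⥤ Discrete A) [F.Full] {a b : C}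
    (h : Zigzag a b) : Nonempty (a ⟶ b) :=
  ⟨F.preimage (eqToHom (Discrete.ext (eq_of_zigzag A (zigzag_obj_of_zigzag F h))))⟩

lemma Functor.nonempty_hom_iff_connectedComponents_eq {A : Type*} (F : C ⥤ Discrete A) [F.Full]
    (a b : C) : Nonempty (a ⟶ b) ↔ ConnectedComponents.mk a = ConnectedComponents.mk b :=
  ⟨fun ⟨f⟩ => Quotient.sound' (Zigzag.of_hom f),
    fun h => F.nonempty_hom_of_zigzag (Quotient.exact' h)⟩

end CategoryTheory

section EqRelCat

variable {C B : Type} [SmallCategory C] (γ : C → B)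

def EqRelCat.functorOfHomEq (hγ : ∀ {a b : C}, (a ⟶ b) → γ a = γ b) : C ⥤ EqRelCat γ where
  obj c := c
  map f := ⟨hγ f⟩

noncomputable def EqRelCat.functorToIsThin [Quiver.IsThin C]
    (hγ : ∀ {a b : C}, γ a = γ b → Nonempty (a ⟶ b)) : EqRelCat γ ⥤ C where
  obj c := c
  map f := (hγ f.down).some
  -- `EqRelCat γ` is not reducibly `C`, so instance search does not see the thinness of `C` here.
  map_id c := (‹Quiver.IsThin C› c c).elim _ _
  map_comp {a _ c} _ _ := (‹Quiver.IsThin C› a c).elim _ _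

noncomputable def EqRelCat.isoOfIsThin [Quiver.IsThin C]
    (hγ : ∀ a b : C, Nonempty (a ⟶ b) ↔ γ a = γ b) : Cat.of C ≅ Cat.of (EqRelCat γ) where
  hom := (EqRelCat.functorOfHomEq γ fun f => (hγ _ _).1 ⟨f⟩).toCatHom
  inv := (EqRelCat.functorToIsThin γ fun h => (hγ _ _).2 h).toCatHom
  hom_inv_id := Cat.Hom.ext <|
    CategoryTheory.Functor.ext (fun _ => rfl) fun a b _ => (‹Quiver.IsThin C› a b).elim _ _
  inv_hom_id := Cat.Hom.ext <|
    CategoryTheory.Functor.ext (fun _ => rfl) fun a b _ => (EqRelCat.isThin γ a b).elim _ _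

end EqRelCat

/-- Let `C` be a small category admitting an equivalence of categories
to a discrete category, and let `γ : Obj(C) → q C` be the map sending each object to its
connected component.  Then every hom-set `Hom_C(a,b)` has at most one element, it is
nonempty if and only if `γ a = γ b`, and consequently `C` is isomorphic, as a category
(i.e. isomorphic in `Cat`), to the equivalence-relation category `(Obj C)[γ]`. -/
theorem stmt13 (C : Type) [SmallCategory C]
    (h : ∃ A : Type, Nonempty (C ≌ Discrete A)) :
    (∀ a b : C, Subsingleton (a ⟶ b)) ∧
    (∀ a b : C, (Nonempty (a ⟶ b) ↔
      (Quotient.mk (Zigzag.setoid C) a : ConnectedComponents C) =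
        Quotient.mk (Zigzag.setoid C) b)) ∧
    Nonempty (Cat.of C ≅
      Cat.of (EqRelCat (fun c : C =>
        (Quotient.mk (Zigzag.setoid C) c : ConnectedComponents C)))) := by
  obtain ⟨A, ⟨e⟩⟩ := h
  have hthin : Quiver.IsThin C := e.functor.isThin_of_faithful
  have hhom := e.functor.nonempty_hom_iff_connectedComponents_eq
  exact ⟨hthin, hhom, ⟨EqRelCat.isoOfIsThin _ hhom⟩⟩
end

section
/- Let Z be a type, let C and D be small categories with equivalences C ≌ Discrete A and D ≌ Discrete B, and let F : C ⥤ Discrete Z, G : D ⥤ Discrete Z be functors, inducing maps a : A → Z and b : B → Z. Let C ×_Z D be the full subcategory of C × D on the objects (c,d) with F(c) = G(d). Then C ×_Z D is equivalent to the discrete category on the set {(x,y) ∈ A × B : a(x) = b(y)}; in particular the fiber product of two homotopically discrete categories over a discrete category is homotopically discrete, and its discretization is the fiber product of the discretizations. -/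
/-!
The equivalence `eC × eD : C × D ≌ Discrete (A × B)` restricts to the fiber product, because
functors into a discrete category are constant on isomorphism classes: `(c, d)` satisfies
`F c = G d` exactly when its image `(x, y)` satisfies `a x = b y`. A full subcategory of a
discrete category is again discrete, on the corresponding subtype.
-/

open CategoryTheory

namespace CategoryTheory

universe u

theorem Functor.obj_eq_of_iso {C D : Type*} [Category* C] [Category* D] [IsDiscrete D]
    (F : C ⥤ D) {X Y : C} (e : X ≅ Y) : F.obj X = F.obj Y :=
  obj_ext_of_isDiscrete (F.map e.hom)

instance ObjectProperty.isClosedUnderIsomorphisms_of_isDiscrete {C : Type*} [Category* C]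
    [IsDiscrete C] (P : ObjectProperty C) : P.IsClosedUnderIsomorphisms :=
  ⟨fun e hX => obj_ext_of_isDiscrete e.hom ▸ hX⟩

def Discrete.fullSubcategoryEquiv {X : Type*} (P : X → Prop) :
    ObjectProperty.FullSubcategory (fun x : Discrete X => P x.as) ≌ Discrete {x // P x} where
  functor :=
    { obj := fun x => ⟨⟨x.obj.as, x.property⟩⟩
      map := fun f => eqToHom (Discrete.ext (Subtype.ext (Discrete.eq_of_hom f.hom))) }
  inverse := Discrete.functor fun x => ⟨⟨x.1⟩, x.2⟩
  unitIso := NatIso.ofComponents fun _ => Iso.refl _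
  counitIso := NatIso.ofComponents fun _ => Iso.refl _

def fiberProductEquivDiscrete {C D : Type*} [Category* C] [Category* D] {Z : Type*}
    {A B : Type u} (F : C ⥤ Discrete Z) (G : D ⥤ Discrete Z) (eC : C ≌ Discrete A)
    (eD : D ≌ Discrete B) :
    ObjectProperty.FullSubcategory (fun p : C × D => F.obj p.1 = G.obj p.2) ≌
      Discrete {p : A × B //
        (F.obj (eC.inverse.obj (Discrete.mk p.1))).as =
          (G.obj (eD.inverse.obj (Discrete.mk p.2))).as} :=
  (((eC.prod eD).trans Discrete.productEquiv.symm).congrFullSubcategory (by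
    ext ⟨c, d⟩
    have hc : F.obj (eC.inverse.obj (eC.functor.obj c)) = F.obj c :=
      F.obj_eq_of_iso (eC.unitIso.app c).symm
    have hd : G.obj (eD.inverse.obj (eD.functor.obj d)) = G.obj d :=
      G.obj_eq_of_iso (eD.unitIso.app d).symm
    change (F.obj (eC.inverse.obj (eC.functor.obj c))).as =
      (G.obj (eD.inverse.obj (eD.functor.obj d))).as ↔ _
    rw [hc, hd, Discrete.ext_iff])).trans
  (Discrete.fullSubcategoryEquiv fun p : A × B =>
    (F.obj (eC.inverse.obj ⟨p.1⟩)).as = (G.obj (eD.inverse.obj ⟨p.2⟩)).as)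

end CategoryTheory

/-- Let `Z` be a type, let `C` and `D` be small categories with
equivalences `eC : C ≌ Discrete A` and `eD : D ≌ Discrete B`, and let
`F : C ⥤ Discrete Z`, `G : D ⥤ Discrete Z` be functors, inducing maps `a : A → Z` and
`b : B → Z` (where `a x` is the element of `Z` picked out by `F` on the object of `C`
corresponding to `x`, and similarly for `b`).  Let `C ×_Z D` be the full subcategory of
`C × D` on the objects `(c,d)` with `F(c) = G(d)`.  Then `C ×_Z D` is equivalent to the
discrete category on the set `{(x,y) ∈ A × B : a x = b y}`; in particular the fiber
product of two homotopically discrete categories over a discrete category is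
homotopically discrete, and its discretization is the fiber product of the
discretizations. -/
theorem stmt16 (C D Z A B : Type) [SmallCategory C] [SmallCategory D]
    (F : C ⥤ Discrete Z) (G : D ⥤ Discrete Z)
    (eC : C ≌ Discrete A) (eD : D ≌ Discrete B) :
    Nonempty ((ObjectProperty.FullSubcategory fun p : C × D => F.obj p.1 = G.obj p.2) ≌
      Discrete {p : A × B //
        (F.obj (eC.inverse.obj (Discrete.mk p.1))).as =
          (G.obj (eD.inverse.obj (Discrete.mk p.2))).as}) :=
  ⟨fiberProductEquivDiscrete F G eC eD⟩
end
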